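/- arXiv:2006.13657 — 3 statements merged into one kernel-verified Lean document; each statement's English description precedes it below -/
import Mathlib

section
/- Let (Ω, P) be a probability space, let m ≥ 1 be an integer, let H be a random variable with Gamma density m^m x^{m-1} e^{-mx}/(m-1)! on x > 0, and let I be a nonnegative random variable independent of H with Laplace transform L(s) = E[e^{-s I}]. Then for all reals a > 0 and σ ≥ 0, P(H ≥ a(I + σ)) = ∑_{k=0}^{m-1} ∑_{p=0}^{k} C(k,p) · ((m a)^k / k!) · σ^p · e^{-m a σ} · (-1)^{k-p} · L^{(k-p)}(m a), where C(k,p) is the binomial coefficient and L^{(j)}(m a) denotes the j-th iterated derivative of L evaluated at m a. -/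
/-!
Conditioning on `I`, the event is `H ≥ t` with `t = a (I + σ)`. For integer shape `m` the Gamma
tail is the Poisson-type sum `P(H ≥ t) = e^{-m t} ∑_{k<m} (m t)^k / k!`, whose derivative in `t`
telescopes to minus the density. Expanding `(m a (I + σ))^k` binomially leaves, for each term,
the moment `E[I^j e^{-m a I}]`, which is `(-1)^j L^{(j)}(m a)` because `L` is the moment
generating function of `-I`, finite on `[0, ∞)` and hence differentiable under the integral on
`(0, ∞)`.
-/

/-- The Gamma density with integer shape `m` and rate `m` (unit mean),
`f(x) = m^m x^{m-1} e^{-m x}/(m-1)!` for `x > 0` and `0` otherwise. -/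
noncomputable def nakagamiGammaPdf (m : ℕ) (x : ℝ) : ℝ :=
  if 0 < x then (m : ℝ) ^ m * x ^ (m - 1) * Real.exp (-(m : ℝ) * x) / (Nat.factorial (m - 1) : ℝ)
  else 0

open MeasureTheory Set Real ProbabilityTheory Filter Topology
open scoped Nat

lemma IndepFun.measure_le_eq_lintegral {Ω α : Type*} [MeasurableSpace Ω] [MeasurableSpace α]
    {P : Measure Ω} [IsFiniteMeasure P] {X : Ω → α} {Y : Ω → ℝ} (hX : Measurable X)
    (hY : Measurable Y) (h : IndepFun X Y P) {g : α → ℝ} (hg : Measurable g) :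
    P {ω | g (X ω) ≤ Y ω} = ∫⁻ ω, P.map Y (Ici (g (X ω))) ∂P := by
  have hS : MeasurableSet {p : α × ℝ | g p.1 ≤ p.2} :=
    measurableSet_le (hg.comp measurable_fst) measurable_snd
  have hmap := (indepFun_iff_map_prod_eq_prod_map_map hX.aemeasurable hY.aemeasurable).mp h
  calc P {ω | g (X ω) ≤ Y ω} = P.map (fun ω => (X ω, Y ω)) {p | g p.1 ≤ p.2} := by
        rw [Measure.map_apply (hX.prodMk hY) hS]; rfl
    _ = ∫⁻ x, P.map Y (Prod.mk x ⁻¹' {p | g p.1 ≤ p.2}) ∂P.map X := by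
        rw [hmap, Measure.prod_apply hS]
    _ = ∫⁻ ω, P.map Y (Ici (g (X ω))) ∂P :=
        lintegral_map (measurable_measure_prodMk_left hS) hX

section Laplace

variable {Ω : Type*} [MeasurableSpace Ω] {μ : Measure Ω} [IsFiniteMeasure μ] {X : Ω → ℝ}

lemma Ioi_subset_interior_integrableExpSet_neg (hX : AEMeasurable X μ) (hX0 : 0 ≤ᵐ[μ] X) :
    Ioi 0 ⊆ interior (integrableExpSet (-X) μ) := by
  rw [← interior_Ici]
  refine interior_mono fun t ht => integrable_exp_mul_of_le t 0 ht hX.neg ?_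
  filter_upwards [hX0] with ω hω
  simpa using hω

lemma integrable_pow_mul_exp_neg_mul (hX : AEMeasurable X μ) (hX0 : 0 ≤ᵐ[μ] X) {s : ℝ}
    (hs : 0 < s) (j : ℕ) : Integrable (fun ω => X ω ^ j * exp (-(s * X ω))) μ := by
  have := (integrable_pow_mul_exp_of_mem_interior_integrableExpSet
    (Ioi_subset_interior_integrableExpSet_neg hX hX0 hs) j).const_mul ((-1) ^ j)
  refine this.congr (ae_of_all _ fun ω => ?_)
  dsimp only
  rw [Pi.neg_apply, neg_pow (X ω), mul_neg, ← mul_assoc, ← mul_assoc, ← mul_pow]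
  norm_num

lemma integral_pow_mul_exp_neg_mul (hX : AEMeasurable X μ) (hX0 : 0 ≤ᵐ[μ] X) {s : ℝ}
    (hs : 0 < s) (j : ℕ) :
    ∫ ω, X ω ^ j * exp (-(s * X ω)) ∂μ = (-1) ^ j * iteratedDeriv j (mgf (-X) μ) s := by
  rw [iteratedDeriv_mgf (Ioi_subset_interior_integrableExpSet_neg hX hX0 hs),
    ← integral_const_mul]
  congr 1 with ω
  rw [Pi.neg_apply, neg_pow (X ω), mul_neg, ← mul_assoc, ← mul_assoc, ← mul_pow]
  norm_num

end Laplace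

/-- `P(G ≥ t)` for `G` Gamma-distributed with integer shape `m` and rate `c`. -/
noncomputable def erlangTail (m : ℕ) (c t : ℝ) : ℝ :=
  exp (-(c * t)) * ∑ k ∈ Finset.range m, (c * t) ^ k / k !

lemma erlangTail_nonneg (m : ℕ) {c t : ℝ} (hc : 0 ≤ c) (ht : 0 ≤ t) :
    0 ≤ erlangTail m c t := by
  unfold erlangTail
  positivity

lemma erlangTail_mul (m : ℕ) (c a t : ℝ) : erlangTail m c (a * t) = erlangTail m (c * a) t := by
  simp only [erlangTail, mul_assoc]

lemma erlangTail_succ (n : ℕ) (c : ℝ) :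
    erlangTail (n + 1) c = fun t => erlangTail n c t + c ^ n * t ^ n * exp (-(c * t)) / n ! := by
  ext t
  rw [erlangTail, erlangTail, Finset.sum_range_succ, mul_pow]
  ring

lemma hasDerivAt_erlangTail (c x : ℝ) (n : ℕ) :
    HasDerivAt (erlangTail (n + 1) c) (-(c ^ (n + 1) * x ^ n * exp (-(c * x)) / n !)) x := by
  have hexp : HasDerivAt (fun t => exp (-(c * t))) (-c * exp (-(c * x))) x := by
    simpa [mul_comm] using ((hasDerivAt_id x).const_mul c).neg.exp
  induction n with
  | zero =>
    have h1 : erlangTail 1 c = fun t => exp (-(c * t)) := by ext; simp [erlangTail]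
    rw [h1]
    convert hexp using 1
    simp
  | succ n ih =>
    rw [erlangTail_succ]
    have hterm := ((hasDerivAt_pow (n + 1) x).const_mul (c ^ (n + 1))).mul hexp |>.div_const
      ((n + 1) ! : ℝ)
    refine (ih.add hterm).congr_deriv ?_
    rw [Nat.factorial_succ]
    push_cast
    field_simp
    ring

lemma tendsto_erlangTail_atTop (m : ℕ) {c : ℝ} (hc : 0 < c) :
    Tendsto (erlangTail m c) atTop (𝓝 0) := by
  have hct : Tendsto (fun t => c * t) atTop atTop := tendsto_id.const_mul_atTop hc
  have h := tendsto_finsetSum (Finset.range m) fun k _ =>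
    ((tendsto_pow_mul_exp_neg_atTop_nhds_zero k).comp hct).div_const (k ! : ℝ)
  simp only [zero_div, Finset.sum_const_zero] at h
  refine h.congr fun t => ?_
  simp only [erlangTail, Function.comp_apply, Finset.mul_sum]
  exact Finset.sum_congr rfl fun k _ => by ring

lemma integral_Ioi_erlangDensity (n : ℕ) {c t : ℝ} (hc : 0 < c) (ht : 0 ≤ t) :
    IntegrableOn (fun x => c ^ (n + 1) * x ^ n * exp (-(c * x)) / n !) (Ioi t) ∧
      ∫ x in Ioi t, c ^ (n + 1) * x ^ n * exp (-(c * x)) / n ! = erlangTail (n + 1) c t := by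
  have hderiv : ∀ x ∈ Ici t, HasDerivAt (fun x => -erlangTail (n + 1) c x)
      (c ^ (n + 1) * x ^ n * exp (-(c * x)) / n !) x := fun x _ => by
    simpa using (hasDerivAt_erlangTail c x n).fun_neg
  have hpos : ∀ x ∈ Ioi t, 0 ≤ c ^ (n + 1) * x ^ n * exp (-(c * x)) / n ! := fun x hx => by
    have : 0 ≤ x := ht.trans hx.out.le
    positivity
  have hlim : Tendsto (fun x => -erlangTail (n + 1) c x) atTop (𝓝 0) := by
    simpa using (tendsto_erlangTail_atTop (n + 1) hc).neg
  refine ⟨integrableOn_Ioi_deriv_of_nonneg' hderiv hpos hlim, ?_⟩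
  rw [integral_Ioi_of_hasDerivAt_of_nonneg' hderiv hpos hlim]
  ring

lemma lintegral_Ici_nakagamiGammaPdf {m : ℕ} (hm : 1 ≤ m) {t : ℝ} (ht : 0 ≤ t) :
    ∫⁻ x in Ici t, ENNReal.ofReal (nakagamiGammaPdf m x) =
      ENNReal.ofReal (erlangTail m m t) := by
  obtain ⟨n, rfl⟩ := Nat.exists_eq_add_of_le' hm
  have hc : (0 : ℝ) < (n + 1 : ℕ) := by positivity
  obtain ⟨hint, hval⟩ := integral_Ioi_erlangDensity n hc ht
  have hpdf : EqOn (fun x => ENNReal.ofReal (nakagamiGammaPdf (n + 1) x))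
      (fun x => ENNReal.ofReal (((n + 1 : ℕ) : ℝ) ^ (n + 1) * x ^ n
        * exp (-((n + 1 : ℕ) * x)) / n !)) (Ioi t) := fun x hx => by
    simp only [nakagamiGammaPdf, if_pos (ht.trans_lt hx), Nat.add_sub_cancel, neg_mul]
  rw [← Measure.restrict_congr_set Ioi_ae_eq_Ici, setLIntegral_congr_fun measurableSet_Ioi hpdf,
    ← ofReal_integral_eq_lintegral_ofReal hint, hval]
  filter_upwards [self_mem_ae_restrict measurableSet_Ioi] with x hx
  have : 0 ≤ x := ht.trans hx.out.le
  positivity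

lemma erlangTail_add (m : ℕ) (c y σ : ℝ) :
    erlangTail m c (y + σ) = ∑ k ∈ Finset.range m, ∑ p ∈ Finset.range (k + 1),
      (k.choose p : ℝ) * (c ^ k / k !) * σ ^ p * exp (-(c * σ))
        * (y ^ (k - p) * exp (-(c * y))) := by
  have hexp : exp (-(c * (y + σ))) = exp (-(c * σ)) * exp (-(c * y)) := by
    rw [← exp_add]; ring_nf
  rw [erlangTail, hexp, Finset.mul_sum]
  refine Finset.sum_congr rfl fun k _ => ?_
  rw [mul_pow, add_comm y σ, add_pow, Finset.mul_sum, Finset.sum_div, Finset.mul_sum]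
  exact Finset.sum_congr rfl fun p _ => by ring

lemma integral_erlangTail_add {Ω : Type*} [MeasurableSpace Ω] {μ : Measure Ω}
    [IsFiniteMeasure μ] {X : Ω → ℝ} (hX : AEMeasurable X μ) (hX0 : 0 ≤ᵐ[μ] X) {c : ℝ}
    (hc : 0 < c) (m : ℕ) (σ : ℝ) :
    Integrable (fun ω => erlangTail m c (X ω + σ)) μ ∧
      ∫ ω, erlangTail m c (X ω + σ) ∂μ =
        ∑ k ∈ Finset.range m, ∑ p ∈ Finset.range (k + 1),
          (k.choose p : ℝ) * (c ^ k / k !) * σ ^ p * exp (-(c * σ)) * (-1) ^ (k - p)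
            * iteratedDeriv (k - p) (mgf (-X) μ) c := by
  simp_rw [erlangTail_add]
  have hterm (k p : ℕ) := (integrable_pow_mul_exp_neg_mul hX hX0 hc (k - p)).const_mul
    ((k.choose p : ℝ) * (c ^ k / k !) * σ ^ p * exp (-(c * σ)))
  refine ⟨integrable_finsetSum _ fun k _ => integrable_finsetSum _ fun p _ => hterm k p, ?_⟩
  rw [integral_finsetSum _ fun k _ => integrable_finsetSum _ fun p _ => hterm k p]
  refine Finset.sum_congr rfl fun k _ => ?_
  rw [integral_finsetSum _ fun p _ => hterm k p]
  refine Finset.sum_congr rfl fun p _ => ?_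
  rw [integral_const_mul, integral_pow_mul_exp_neg_mul hX hX0 hc]
  ring

/-- Exact coverage probability through Laplace-transform derivatives: if `H` is Gamma
with shape `m` and rate `m`, `I ≥ 0` is independent of `H` with Laplace transform `L`,
then for `a > 0`, `σ ≥ 0`,
`P(H ≥ a(I + σ)) = ∑_{k=0}^{m-1} ∑_{p=0}^{k} C(k,p) ((m a)^k/k!) σ^p e^{-m a σ}
  (-1)^{k-p} L^{(k-p)}(m a)`. -/
theorem coverage_probability_exact
    {Ω : Type*} [MeasurableSpace Ω] (P : Measure Ω) [IsProbabilityMeasure P]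
    (m : ℕ) (hm : 1 ≤ m)
    (H I : Ω → ℝ) (hH : Measurable H) (hI : Measurable I)
    (hHlaw : P.map H = volume.withDensity (fun x => ENNReal.ofReal (nakagamiGammaPdf m x)))
    (hI0 : ∀ ω, 0 ≤ I ω) (hindep : IndepFun H I P)
    (L : ℝ → ℝ) (hL : ∀ s : ℝ, L s = ∫ ω, Real.exp (-s * I ω) ∂P)
    (a σ : ℝ) (ha : 0 < a) (hσ : 0 ≤ σ) :
    (P {ω | a * (I ω + σ) ≤ H ω}).toReal
      = ∑ k ∈ Finset.range m, ∑ p ∈ Finset.range (k + 1),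
          (k.choose p : ℝ) * (((m : ℝ) * a) ^ k / (Nat.factorial k : ℝ)) * σ ^ p
            * Real.exp (-(m : ℝ) * a * σ) * (-1 : ℝ) ^ (k - p)
            * iteratedDeriv (k - p) L ((m : ℝ) * a) := by
  have hs : 0 < (m : ℝ) * a := mul_pos (Nat.cast_pos.mpr hm) ha
  have hLmgf : L = mgf (-I) P := funext fun s => by
    simp only [hL, mgf, Pi.neg_apply, mul_neg, neg_mul]
  have htail (ω : Ω) :
      P.map H (Ici (a * (I ω + σ))) = ENNReal.ofReal (erlangTail m (m * a) (I ω + σ)) := by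
    rw [hHlaw, withDensity_apply _ measurableSet_Ici,
      lintegral_Ici_nakagamiGammaPdf hm (mul_nonneg ha.le (add_nonneg (hI0 ω) hσ)),
      erlangTail_mul]
  have hnonneg (ω : Ω) : 0 ≤ erlangTail m (m * a) (I ω + σ) :=
    erlangTail_nonneg m hs.le (add_nonneg (hI0 ω) hσ)
  obtain ⟨hint, hval⟩ :=
    integral_erlangTail_add (μ := P) hI.aemeasurable (ae_of_all _ hI0) hs m σ
  have hcond := IndepFun.measure_le_eq_lintegral hI hH hindep.symm
    (g := fun y => a * (y + σ)) (by fun_prop)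
  rw [hcond, lintegral_congr htail,
    ← ofReal_integral_eq_lintegral_ofReal hint (ae_of_all _ hnonneg),
    ENNReal.toReal_ofReal (integral_nonneg hnonneg), hval, hLmgf]
  simp only [neg_mul]
end

section
/- For every integer m ≥ 1 and every real x ≥ 0, the regularized lower incomplete Gamma function satisfies (1 - e^{-b x})^m ≤ (1/(m-1)!) ∫_0^x t^{m-1} e^{-t} dt, where b = (m!)^{-1/m}. -/
/-!
Let `F` be the right-hand side and `G x = (1 - e^{-bx})^m`; both increase from `0` to `1` on
`[0, ∞)`. Because `m! b^m = 1`, `F' - G' = m b e^{-bx} (P - Q)` with `P x = (bx)^{m-1} e^{-(1-b)x}`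
and `Q x = (1 - e^{-bx})^{m-1}`, and `log P - log Q = (m-1) ψ(bx) - (1-b)x` where
`ψ u = log u - log (1 - e^{-u})` is nonnegative and concave. So `P ≥ Q` on `(0, c]` whenever
`P c ≥ Q c`, i.e. `F' - G' ≥ 0` to the left of each of its zeros. Then `F - G`, which
vanishes at `0` and at `∞`, cannot attain a negative minimum.
-/

open MeasureTheory Set Real Filter Topology
open scoped Nat

theorem nonneg_of_deriv_nonneg_below_critical_points {f f' : ℝ → ℝ}
    (hcont : ContinuousOn f (Ici 0)) (hf : ∀ y > 0, HasDerivAt f (f' y) y) (h0 : f 0 = 0)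
    (htop : Tendsto f atTop (𝓝 0)) (hsign : ∀ c > 0, f' c = 0 → ∀ y ∈ Ioo 0 c, 0 ≤ f' y)
    {x : ℝ} (hx : 0 ≤ x) : 0 ≤ f x := by
  by_contra! hfx
  obtain ⟨T, hfT, hxT⟩ : ∃ T, f x < f T ∧ x < T :=
    ((htop.eventually (lt_mem_nhds hfx)).and (eventually_gt_atTop x)).exists
  have hxI : x ∈ Icc 0 T := ⟨hx, hxT.le⟩
  obtain ⟨c, hc, hmin⟩ := isCompact_Icc.exists_isMinOn (nonempty_of_mem hxI)
    (hcont.mono Icc_subset_Ici_self)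
  have hcx : f c ≤ f x := hmin hxI
  have hc0 : 0 < c := hc.1.lt_of_ne (by rintro rfl; linarith)
  have hcT : c < T := hc.2.lt_of_ne (by rintro rfl; linarith)
  have hf'c : f' c = 0 :=
    (hmin.isLocalMin (Icc_mem_nhds hc0 hcT)).hasDerivAt_eq_zero (hf c hc0)
  have hmono : MonotoneOn f (Icc 0 c) := by
    refine monotoneOn_of_hasDerivWithinAt_nonneg (f' := f') (convex_Icc 0 c)
      (hcont.mono Icc_subset_Ici_self) (fun y hy => ?_) (fun y hy => ?_) <;>
    rw [interior_Icc] at hy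
    · exact (hf y hy.1).hasDerivWithinAt
    · exact hsign c hc0 hf'c y hy
  have := hmono (left_mem_Icc.2 hc0.le) (right_mem_Icc.2 hc0.le) hc0.le
  linarith

theorem ConcaveOn.nonneg_of_nonneg_right {g : ℝ → ℝ} (hg : ConcaveOn ℝ (Ioi 0) g) {K c x : ℝ}
    (hlow : ∀ t > 0, -(K * t) ≤ g t) (hc : 0 ≤ g c) (hx : 0 < x) (hxc : x ≤ c) : 0 ≤ g x := by
  have hbound : ∀ t ∈ Ioo 0 x, min (-(K * t)) 0 ≤ g x := fun t ht =>
    calc min (-(K * t)) 0 ≤ min (g t) (g c) := min_le_min (hlow t ht.1) hc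
      _ ≤ g x := hg.min_le_of_mem_Icc ht.1 (hx.trans_le hxc) ⟨ht.2.le, hxc⟩
  have hlim : Tendsto (fun t => min (-(K * t)) 0) (𝓝[>] 0) (𝓝 0) := by
    have : Continuous (fun t : ℝ => min (-(K * t)) 0) := by fun_prop
    simpa using (this.tendsto 0).mono_left nhdsWithin_le_nhds
  exact le_of_tendsto hlim (eventually_of_mem (Ioo_mem_nhdsGT hx) hbound)

theorem one_sub_exp_neg_pos {u : ℝ} (hu : 0 < u) : 0 < 1 - exp (-u) :=
  sub_pos.2 (exp_lt_one_iff.2 (neg_lt_zero.2 hu))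

theorem sq_mul_exp_le_exp_sub_one_sq {u : ℝ} (hu : 0 ≤ u) : u ^ 2 * exp u ≤ (exp u - 1) ^ 2 := by
  have hsinh : u / 2 ≤ sinh (u / 2) := self_le_sinh_iff.2 (by linarith)
  have hhalf : u * exp (u / 2) ≤ exp u - 1 :=
    calc u * exp (u / 2) ≤ 2 * sinh (u / 2) * exp (u / 2) := by gcongr; linarith
      _ = exp u - 1 := by
        have h1 : exp (-(u / 2)) * exp (u / 2) = 1 := by rw [← exp_add]; simp
        have h2 : exp u = exp (u / 2) * exp (u / 2) := by rw [← exp_add]; ring_nf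
        rw [sinh_eq]
        linear_combination -h1 - h2
  calc u ^ 2 * exp u = (u * exp (u / 2)) ^ 2 := by rw [mul_pow, ← exp_nat_mul]; ring_nf
    _ ≤ (exp u - 1) ^ 2 := pow_le_pow_left₀ (by positivity) hhalf 2

theorem hasDerivAt_log_sub_log_one_sub_exp_neg {u : ℝ} (hu : 0 < u) :
    HasDerivAt (fun u => log u - log (1 - exp (-u))) (u⁻¹ - (exp u - 1)⁻¹) u := by
  refine ((hasDerivAt_log hu.ne').sub
    (((hasDerivAt_neg u).exp.const_sub 1).log (one_sub_exp_neg_pos hu).ne')).congr_deriv ?_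
  rw [exp_neg]
  field_simp

theorem hasDerivAt_inv_sub_inv_exp_sub_one {u : ℝ} (hu : 0 < u) :
    HasDerivAt (fun u => u⁻¹ - (exp u - 1)⁻¹) (-(u ^ 2)⁻¹ + exp u / (exp u - 1) ^ 2) u := by
  have hE : exp u - 1 ≠ 0 := by linarith [add_one_lt_exp hu.ne']
  refine ((hasDerivAt_inv hu.ne').sub (((hasDerivAt_exp u).sub_const 1).inv hE)).congr_deriv ?_
  ring

theorem concaveOn_log_sub_log_one_sub_exp_neg :
    ConcaveOn ℝ (Ioi 0) (fun u => log u - log (1 - exp (-u))) := by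
  refine concaveOn_of_hasDerivWithinAt2_nonpos (f' := fun u => u⁻¹ - (exp u - 1)⁻¹)
    (f'' := fun u => -(u ^ 2)⁻¹ + exp u / (exp u - 1) ^ 2) (convex_Ioi 0)
    (fun u hu => (hasDerivAt_log_sub_log_one_sub_exp_neg hu).continuousAt.continuousWithinAt)
    (fun u hu => ?_) (fun u hu => ?_) (fun u hu => ?_) <;> simp only [interior_Ioi, mem_Ioi] at hu
  · exact (hasDerivAt_log_sub_log_one_sub_exp_neg hu).hasDerivWithinAt
  · exact (hasDerivAt_inv_sub_inv_exp_sub_one hu).hasDerivWithinAt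
  · have hE : 0 < exp u - 1 := by linarith [add_one_lt_exp hu.ne']
    rw [neg_add_le_iff_le_add, add_zero, div_le_iff₀ (by positivity), ← div_eq_inv_mul,
      le_div_iff₀ (by positivity)]
    linarith [sq_mul_exp_le_exp_sub_one_sq hu.le]

theorem log_one_sub_exp_neg_le_log {u : ℝ} (hu : 0 < u) : log (1 - exp (-u)) ≤ log u :=
  log_le_log (one_sub_exp_neg_pos hu) (by linarith [add_one_le_exp (-u)])

theorem one_sub_exp_neg_pow_le_of_le {n : ℕ} {b c y : ℝ} (hb : 0 < b) (hy : 0 < y) (hyc : y ≤ c)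
    (hc : (1 - exp (-(b * c))) ^ n ≤ (b * c) ^ n * exp (-((1 - b) * c))) :
    (1 - exp (-(b * y))) ^ n ≤ (b * y) ^ n * exp (-((1 - b) * y)) := by
  set H : ℝ → ℝ := fun x => n * (log (b * x) - log (1 - exp (-(b * x)))) - (1 - b) * x
  have hiff : ∀ x > 0,
      (1 - exp (-(b * x))) ^ n ≤ (b * x) ^ n * exp (-((1 - b) * x)) ↔ 0 ≤ H x := by
    intro x hx
    have hbx : 0 < b * x := mul_pos hb hx
    have := one_sub_exp_neg_pos hbx
    rw [← log_le_log_iff (by positivity) (by positivity), log_pow, log_mul (by positivity)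
      (exp_pos _).ne', log_pow, log_exp]
    constructor <;> intro h <;> linarith
  have hψ : ConcaveOn ℝ (Ioi 0) fun x => log (b * x) - log (1 - exp (-(b * x))) := by
    have hpre : LinearMap.mulLeft ℝ b ⁻¹' Ioi 0 = Ioi 0 := by
      ext x; simp [mul_pos_iff_of_pos_left hb]
    have := concaveOn_log_sub_log_one_sub_exp_neg.comp_linearMap (LinearMap.mulLeft ℝ b)
    rw [hpre] at this
    exact this
  have hH : ConcaveOn ℝ (Ioi 0) H :=
    (hψ.smul n.cast_nonneg).sub ((LinearMap.mulLeft ℝ (1 - b)).convexOn (convex_Ioi 0))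
  have hlow : ∀ t > 0, -((1 - b) * t) ≤ H t := fun t ht => by
    have := mul_nonneg n.cast_nonneg (sub_nonneg.2 (log_one_sub_exp_neg_le_log (mul_pos hb ht)))
    linarith
  exact (hiff y hy).2 (hH.nonneg_of_nonneg_right hlow ((hiff c (hy.trans_le hyc)).1 hc) hy hyc)

theorem tendsto_integral_pow_mul_exp_neg_atTop (n : ℕ) :
    Tendsto (fun x => ∫ t in (0 : ℝ)..x, t ^ n * exp (-t)) atTop (𝓝 n !) := by
  have hGamma : ∀ t ∈ Ioi (0 : ℝ), exp (-t) * t ^ ((n + 1 : ℝ) - 1) = t ^ n * exp (-t) := by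
    intro t _
    rw [add_sub_cancel_right, rpow_natCast, mul_comm]
  have hint : IntegrableOn (fun t => t ^ n * exp (-t)) (Ioi 0) :=
    (GammaIntegral_convergent (by positivity)).congr_fun hGamma measurableSet_Ioi
  have hval : ∫ t in Ioi 0, t ^ n * exp (-t) = n ! := by
    rw [← Gamma_nat_eq_factorial, Gamma_eq_integral (by positivity)]
    exact (setIntegral_congr_fun measurableSet_Ioi hGamma).symm
  simpa [hval] using intervalIntegral_tendsto_integral_Ioi 0 hint tendsto_id

theorem hasDerivAt_integral_pow_mul_exp_neg (n : ℕ) (y : ℝ) :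
    HasDerivAt (fun x => ∫ t in (0 : ℝ)..x, t ^ n * exp (-t)) (y ^ n * exp (-y)) y :=
  (Continuous.integral_hasStrictDerivAt (by fun_prop) 0 y).hasDerivAt

theorem hasDerivAt_one_sub_exp_neg_mul_pow (n : ℕ) (b y : ℝ) :
    HasDerivAt (fun y => (1 - exp (-(b * y))) ^ (n + 1))
      ((n + 1) * b * exp (-(b * y)) * (1 - exp (-(b * y))) ^ n) y := by
  refine ((((hasDerivAt_id' y).const_mul b).neg.exp.const_sub 1).pow (n + 1)).congr_deriv ?_
  simp only [Pi.neg_apply, Nat.add_sub_cancel]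
  push_cast
  ring

theorem tendsto_one_sub_exp_neg_mul_pow_atTop (n : ℕ) {b : ℝ} (hb : 0 < b) :
    Tendsto (fun y => (1 - exp (-(b * y))) ^ n) atTop (𝓝 1) := by
  have h : Tendsto (fun y => exp (-(b * y))) atTop (𝓝 0) :=
    tendsto_exp_atBot.comp (tendsto_neg_atTop_atBot.comp (tendsto_id.const_mul_atTop hb))
  simpa using (h.const_sub 1).pow n

theorem rpow_neg_one_div_natCast_pow {x : ℝ} (hx : 0 ≤ x) {m : ℕ} (hm : m ≠ 0) :
    (x ^ (-1 / (m : ℝ))) ^ m = x⁻¹ := by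
  rw [neg_div, one_div, rpow_neg hx, inv_pow, rpow_inv_natCast_pow hx hm]

theorem one_div_factorial_mul_sub_eq {n : ℕ} {b : ℝ} (hb : b ^ (n + 1) = ((n + 1)! : ℝ)⁻¹)
    (y : ℝ) :
    1 / (n ! : ℝ) * (y ^ n * exp (-y)) - (n + 1) * b * exp (-(b * y)) * (1 - exp (-(b * y))) ^ n =
      (n + 1) * b * exp (-(b * y)) *
        ((b * y) ^ n * exp (-((1 - b) * y)) - (1 - exp (-(b * y))) ^ n) := by
  have hexp : exp (-y) = exp (-(b * y)) * exp (-((1 - b) * y)) := by rw [← exp_add]; ring_nf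
  have hfac : 1 / (n ! : ℝ) = (n + 1) * b ^ (n + 1) := by
    rw [hb, Nat.factorial_succ]
    push_cast
    field_simp
  rw [hfac, hexp]
  ring

/-- Lower Alzer inequality for the regularized lower incomplete Gamma function: for an
integer `m ≥ 1`, `x ≥ 0` and `b = (m!)^{-1/m}`,
`(1 - e^{-b x})^m ≤ (1/(m-1)!) ∫_0^x t^{m-1} e^{-t} dt`. -/
theorem alzer_lower_bound
    (m : ℕ) (hm : 1 ≤ m) (x : ℝ) (hx : 0 ≤ x) :
    (1 - Real.exp (-((Nat.factorial m : ℝ) ^ (-(1 : ℝ) / (m : ℝ))) * x)) ^ m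
      ≤ (1 / (Nat.factorial (m - 1) : ℝ)) * ∫ t in (0 : ℝ)..x, t ^ (m - 1) * Real.exp (-t) := by
  obtain ⟨n, rfl⟩ := Nat.exists_eq_add_of_le' hm
  rw [Nat.add_sub_cancel, neg_mul]
  set b := ((n + 1)! : ℝ) ^ (-(1 : ℝ) / ((n + 1 : ℕ) : ℝ))
  have hb : 0 < b := by positivity
  have hbn : b ^ (n + 1) = ((n + 1)! : ℝ)⁻¹ :=
    rpow_neg_one_div_natCast_pow (by positivity) n.succ_ne_zero
  set F := fun y => 1 / (n ! : ℝ) * ∫ t in (0 : ℝ)..y, t ^ n * exp (-t)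
  set G := fun y => (1 - exp (-(b * y))) ^ (n + 1)
  have hFG : ∀ y, HasDerivAt (fun y => F y - G y) _ y := fun y =>
    ((hasDerivAt_integral_pow_mul_exp_neg n y).const_mul _).sub
      (hasDerivAt_one_sub_exp_neg_mul_pow n b y)
  have htop : Tendsto (fun y => F y - G y) atTop (𝓝 0) := by
    simpa [F, G, n.factorial_ne_zero] using
      ((tendsto_integral_pow_mul_exp_neg_atTop n).const_mul (1 / (n ! : ℝ))).sub
        (tendsto_one_sub_exp_neg_mul_pow_atTop (n + 1) hb)
  suffices 0 ≤ F x - G x from sub_nonneg.1 this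
  refine nonneg_of_deriv_nonneg_below_critical_points
    (fun y _ => (hFG y).continuousAt.continuousWithinAt) (fun y _ => hFG y) (by simp [F, G])
    htop ?_ hx
  intro c _ hc y hy
  rw [one_div_factorial_mul_sub_eq hbn] at hc ⊢
  have hPQ := sub_eq_zero.1 ((mul_eq_zero.1 hc).resolve_left (by positivity))
  exact mul_nonneg (by positivity)
    (sub_nonneg.2 (one_sub_exp_neg_pow_le_of_le hb hy.1 hy.2.le hPQ.ge))
end

section
/- For every integer m ≥ 1 and every real x ≥ 0, the regularized lower incomplete Gamma function satisfies (1/(m-1)!) ∫_0^x t^{m-1} e^{-t} dt ≤ (1 - e^{-x})^m. -/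
/-!
Write `γₙ(x) = ∫₀ˣ tⁿ e⁻ᵗ dt`. Integration by parts gives `γₙ₊₁ = (n + 1) γₙ - xⁿ⁺¹ e⁻ˣ`.
Split `γₙ = (1 - e⁻ˣ) γₙ + e⁻ˣ γₙ`: the first part is at most `n! (1 - e⁻ˣ)ⁿ⁺²` by induction,
and the crude bound `γₙ ≤ xⁿ⁺¹ / (n + 1)` (from `e⁻ᵗ ≤ 1`) makes the second part cancel the
boundary term exactly, so `γₙ₊₁ ≤ (n + 1)! (1 - e⁻ˣ)ⁿ⁺²`.
-/

open MeasureTheory Set Real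
open scoped Nat

/-- `lowerIncGamma n x` is `γ(n + 1, x)`: indexing by the exponent keeps ℕ-subtraction out of
the recursion. -/
noncomputable def lowerIncGamma (n : ℕ) (x : ℝ) : ℝ :=
  ∫ t in (0 : ℝ)..x, t ^ n * exp (-t)

lemma hasDerivAt_neg_exp_neg (t : ℝ) : HasDerivAt (fun t => -exp (-t)) (exp (-t)) t := by
  simpa using (hasDerivAt_neg t).exp.fun_neg

lemma lowerIncGamma_zero (x : ℝ) : lowerIncGamma 0 x = 1 - exp (-x) := by
  simp [lowerIncGamma, intervalIntegral.integral_comp_neg (fun t => exp t)]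

lemma lowerIncGamma_succ (n : ℕ) (x : ℝ) :
    lowerIncGamma (n + 1) x = (n + 1) * lowerIncGamma n x - x ^ (n + 1) * exp (-x) := by
  have hparts := intervalIntegral.integral_mul_deriv_eq_deriv_mul (a := 0) (b := x)
    (fun t _ => hasDerivAt_pow (n + 1) t) (fun t _ => hasDerivAt_neg_exp_neg t)
    ((by fun_prop : Continuous fun t : ℝ => ((n + 1 : ℕ) : ℝ) * t ^ n).intervalIntegrable 0 x)
    ((by fun_prop : Continuous fun t : ℝ => exp (-t)).intervalIntegrable 0 x)
  rw [lowerIncGamma, lowerIncGamma, hparts, Nat.add_sub_cancel, zero_pow n.succ_ne_zero]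
  simp only [mul_neg, mul_assoc, intervalIntegral.integral_neg, intervalIntegral.integral_const_mul]
  push_cast
  ring

lemma lowerIncGamma_le_pow_succ_div {x : ℝ} (hx : 0 ≤ x) (n : ℕ) :
    lowerIncGamma n x ≤ x ^ (n + 1) / (n + 1) := by
  calc lowerIncGamma n x ≤ ∫ t in (0 : ℝ)..x, t ^ n := by
        refine intervalIntegral.integral_mono_on hx
          ((by fun_prop : Continuous fun t : ℝ => t ^ n * exp (-t)).intervalIntegrable 0 x)
          ((continuous_pow n).intervalIntegrable 0 x) fun t ht => ?_
        exact mul_le_of_le_one_right (pow_nonneg ht.1 n) (exp_le_one_iff.mpr (neg_nonpos.mpr ht.1))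
    _ = x ^ (n + 1) / (n + 1) := by simp [integral_pow]

lemma lowerIncGamma_le_factorial_mul {x : ℝ} (hx : 0 ≤ x) (n : ℕ) :
    lowerIncGamma n x ≤ n ! * (1 - exp (-x)) ^ (n + 1) := by
  set e := exp (-x)
  have he : 0 ≤ e := (exp_pos _).le
  have he' : 0 ≤ 1 - e := sub_nonneg.mpr (exp_le_one_iff.mpr (neg_nonpos.mpr hx))
  induction n with
  | zero => simp [lowerIncGamma_zero, e]
  | succ n ih =>
    have hsplit : lowerIncGamma n x ≤ n ! * (1 - e) ^ (n + 2) + e * (x ^ (n + 1) / (n + 1)) :=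
      calc lowerIncGamma n x = (1 - e) * lowerIncGamma n x + e * lowerIncGamma n x := by ring
        _ ≤ (1 - e) * (n ! * (1 - e) ^ (n + 1)) + e * (x ^ (n + 1) / (n + 1)) :=
          add_le_add (mul_le_mul_of_nonneg_left ih he')
            (mul_le_mul_of_nonneg_left (lowerIncGamma_le_pow_succ_div hx n) he)
        _ = n ! * (1 - e) ^ (n + 2) + e * (x ^ (n + 1) / (n + 1)) := by ring
    calc lowerIncGamma (n + 1) x = (n + 1) * lowerIncGamma n x - x ^ (n + 1) * e :=
          lowerIncGamma_succ n x
      _ ≤ (n + 1) * (n ! * (1 - e) ^ (n + 2) + e * (x ^ (n + 1) / (n + 1))) - x ^ (n + 1) * e := by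
          gcongr
      _ = (n + 1)! * (1 - e) ^ (n + 1 + 1) := by
          push_cast [Nat.factorial_succ]
          field_simp
          ring

/-- Upper Alzer inequality for the regularized lower incomplete Gamma function: for an
integer `m ≥ 1` and `x ≥ 0`, `(1/(m-1)!) ∫_0^x t^{m-1} e^{-t} dt ≤ (1 - e^{-x})^m`. -/
theorem alzer_upper_bound
    (m : ℕ) (hm : 1 ≤ m) (x : ℝ) (hx : 0 ≤ x) :
    (1 / (Nat.factorial (m - 1) : ℝ)) * ∫ t in (0 : ℝ)..x, t ^ (m - 1) * Real.exp (-t)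
      ≤ (1 - Real.exp (-x)) ^ m := by
  obtain ⟨n, rfl⟩ := Nat.exists_eq_add_of_le' hm
  rw [Nat.add_sub_cancel, one_div, inv_mul_le_iff₀ (by positivity)]
  exact lowerIncGamma_le_factorial_mul hx n
end
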